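/- arXiv:2312.02964 — 7 statements merged into one kernel-verified Lean document; each statement's English description precedes it below -/
import Mathlib

section
/- Let d ≥ 1 and n = 3d. The graph Γ whose vertices are the even-weight binary vectors of length n, with two vectors adjacent iff their difference has Hamming weight 2d, is locally K(n, d). -/
open Finset

/-- The Kneser graph `K(n,d)`. -/
def kneser (n d : ℕ) : SimpleGraph {s : Finset (Fin n) // s.card = d} where
  Adj A B := A ≠ B ∧ Disjoint A.val B.val
  symm := ⟨fun _ _ h => ⟨h.1.symm, h.2.symm⟩⟩
  loopless := ⟨fun _ h => h.1 rfl⟩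

/-- Hamming weight of a binary vector. -/
def wt {n : ℕ} (v : Fin n → ZMod 2) : ℕ := (Finset.univ.filter fun i => v i ≠ 0).card

/-- The graph on the even-weight binary vectors of length `n`,
adjacent when their difference has Hamming weight `k`. -/
def evenGraph (n k : ℕ) : SimpleGraph {v : Fin n → ZMod 2 // Even (wt v)} where
  Adj u v := u ≠ v ∧ wt (u.val + v.val) = k
  symm := ⟨fun _ _ h => ⟨h.1.symm, by rw [add_comm]; exact h.2⟩⟩
  loopless := ⟨fun _ h => h.1 rfl⟩

/-- `Γ` is locally `Δ`. -/
def IsLocally {V W : Type*} (Γ : SimpleGraph V) (Δ : SimpleGraph W) : Prop :=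
  ∀ v : V, Nonempty ((Γ.induce (Γ.neighborSet v)) ≃g Δ)

/-!
Translating by `v`, the neighbours of `v` become the vectors of weight `2d` (all of them even),
that is, via supports, the `2d`-subsets of the `3d` coordinates. For two such sets `A`, `B`,
`|A ∆ B| = 2d` holds iff `|A ∩ B| = d`, iff `A ∪ B` is everything, iff `Aᶜ` and `Bᶜ` are disjoint;
so `A ↦ Aᶜ` carries the neighbourhood of `v` onto `K(3d, d)`.
-/

open scoped symmDiff

section Support

variable {ι : Type*} [Fintype ι] [DecidableEq ι]

def suppEquiv : (ι → ZMod 2) ≃ Finset ι where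
  toFun v := {i | v i ≠ 0}
  invFun s i := if i ∈ s then 1 else 0
  left_inv v := by
    funext i
    rcases (by decide : ∀ x : ZMod 2, x = 0 ∨ x = 1) (v i) with h | h <;> simp [h]
  right_inv s := by
    ext i
    by_cases h : i ∈ s <;> simp [h]

lemma suppEquiv_add (a b : ι → ZMod 2) : suppEquiv (a + b) = suppEquiv a ∆ suppEquiv b := by
  ext i
  simp only [suppEquiv, Equiv.coe_fn_mk, mem_symmDiff, mem_filter, mem_univ, true_and,
    Pi.add_apply]
  generalize a i = x, b i = y
  revert x y
  decide

lemma card_suppEquiv {n : ℕ} (v : Fin n → ZMod 2) : #(suppEquiv v) = wt v := rfl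

end Support

lemma ZModModule.add_add_cancel_left {G : Type*} [AddCommGroup G] [Module (ZMod 2) G]
    (a b : G) : a + (a + b) = b := by
  rw [← add_assoc, ZModModule.add_self, zero_add]

section Cardinality

variable {α : Type*} [DecidableEq α]

lemma card_symmDiff_add_two_mul_card_inter (s t : Finset α) :
    #(s ∆ t) + 2 * #(s ∩ t) = #s + #t := by
  rw [symmDiff_eq_sup_sdiff_inf, sup_eq_union, inf_eq_inter,
    card_sdiff_of_subset inter_subset_union]
  have := card_union_add_card_inter s t
  have := card_le_card (inter_subset_union (s := s) (t := t))
  omega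

lemma card_symmDiff_eq_two_mul_card_compl_iff [Fintype α] {s t : Finset α} (h : #s = #t) :
    #(s ∆ t) = 2 * #sᶜ ↔ Disjoint sᶜ tᶜ := by
  rw [disjoint_iff_inter_eq_empty, ← compl_union, compl_eq_empty_iff, ← card_eq_iff_eq_univ,
    card_compl]
  have := card_symmDiff_add_two_mul_card_inter s t
  have := card_union_add_card_inter s t
  have := card_le_univ (s ∪ t)
  omega

def complCardEquiv [Fintype α] {k m : ℕ} (h : k + m = Fintype.card α) :
    {s : Finset α // #s = k} ≃ {s : Finset α // #s = m} :=
  (compl_involutive.toPerm _).subtypeEquiv fun s => by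
    have := card_le_univ s
    simp only [Function.Involutive.coe_toPerm, card_compl]
    omega

end Cardinality

section EvenGraph

variable {n : ℕ}

lemma even_wt_add {a b : Fin n → ZMod 2} (ha : Even (wt a)) (hb : Even (wt b)) :
    Even (wt (a + b)) := by
  rw [← card_suppEquiv] at *
  rw [suppEquiv_add]
  have := card_symmDiff_add_two_mul_card_inter (suppEquiv a) (suppEquiv b)
  rw [Nat.even_iff] at *
  omega

lemma wt_add_eq_iff_disjoint_compl {d : ℕ} {x y : Fin (3 * d) → ZMod 2} (hx : wt x = 2 * d)
    (hy : wt y = 2 * d) : wt (x + y) = 2 * d ↔ Disjoint (suppEquiv x)ᶜ (suppEquiv y)ᶜ := by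
  rw [← card_suppEquiv] at *
  have hcompl : #(suppEquiv x)ᶜ = d := by rw [card_compl, hx, Fintype.card_fin]; omega
  rw [suppEquiv_add, ← card_symmDiff_eq_two_mul_card_compl_iff (hx.trans hy.symm), hcompl]

def neighborSetEquiv {k : ℕ} (hk : Even k) (hk0 : k ≠ 0)
    (v : {v : Fin n → ZMod 2 // Even (wt v)}) :
    (evenGraph n k).neighborSet v ≃ {x : Fin n → ZMod 2 // wt x = k} where
  toFun u := ⟨v.1 + u.1.1, u.2.2⟩
  invFun x :=
    ⟨⟨v.1 + x.1, even_wt_add v.2 (x.2.symm ▸ hk)⟩,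
      fun h => hk0 <| by
        have hx0 : x.1 = 0 := by simpa using congrArg Subtype.val h
        simp [← x.2, hx0, wt],
      by simpa only [ZModModule.add_add_cancel_left] using x.2⟩
  left_inv u := by simp [ZModModule.add_add_cancel_left]
  right_inv x := by simp [ZModModule.add_add_cancel_left]

def neighborSetIsoKneser {d : ℕ} (hd : d ≠ 0) (v : {v : Fin (3 * d) → ZMod 2 // Even (wt v)}) :
    (evenGraph (3 * d) (2 * d)).induce ((evenGraph (3 * d) (2 * d)).neighborSet v) ≃g
      kneser (3 * d) d where
  toEquiv := (neighborSetEquiv (even_two_mul d) (by omega) v).trans <|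
    (suppEquiv.subtypeEquiv fun x => by rw [card_suppEquiv]).trans
      (complCardEquiv (by rw [Fintype.card_fin]; omega))
  map_rel_iff' {u w} := by
    have key := wt_add_eq_iff_disjoint_compl u.2.2 w.2.2
    rw [add_add_add_comm, ZModModule.add_self, zero_add] at key
    change _ ≠ _ ∧ Disjoint (suppEquiv (v.1 + u.1.1))ᶜ (suppEquiv (v.1 + w.1.1))ᶜ ↔
      u.1 ≠ w.1 ∧ wt (u.1.1 + w.1.1) = 2 * d
    rw [(Equiv.injective _).ne_iff, Subtype.coe_ne_coe, key]

end EvenGraph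

/-- For `d ≥ 1` and `n = 3d`, the graph on even-weight binary vectors of length `n`,
adjacent when their difference has weight `2d`, is locally `K(n,d)`. -/
theorem evenGraph_isLocally_kneser (d : ℕ) (hd : 1 ≤ d) :
    IsLocally (evenGraph (3 * d) (2 * d)) (kneser (3 * d) d) :=
  fun v => ⟨neighborSetIsoKneser (by omega) v⟩
end

section
/- For d ≥ 3, the Kneser graph K(2d+1, d) has girth 6. -/
/-!
Two `d`-subsets of a `(2d+1)`-set disjoint from a common `d`-set `B` both lie in the
`(d+1)`-set `Bᶜ`, so they share at least `d - 1` points. This rules out triangles, and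
pentagons `A₀ ⋯ A₄`, where `A₀ ∩ A₂` and `A₂ ∩ A₄` are disjoint subsets of `A₂` of size
`≥ d - 1`. Two distinct `d`-sets `A, C` cover at least `d + 1` points, so `(A ∪ C)ᶜ` is the
only `d`-set disjoint from both, which rules out 4-cycles. Conversely, for disjoint
`(d-1)`-sets `S, T` and three further points `x, y, z`, the sets
`S+x, T+y, S+z, T+x, S+y, T+z` form a 6-cycle.
-/

open Finset

open SimpleGraph Function

section Finset

variable {α : Type*} [Fintype α] [DecidableEq α] {d : ℕ} {A B C D : Finset α}

lemma le_card_inter_add_one_of_disjoint (hα : Fintype.card α ≤ 2 * d + 1)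
    (hA : #A = d) (hB : #B = d) (hC : #C = d) (hAB : Disjoint A B) (hBC : Disjoint B C) :
    d ≤ #(A ∩ C) + 1 := by
  have hsub : A ∪ C ⊆ Bᶜ := union_subset (subset_compl_iff_disjoint_right.mpr hAB)
    (subset_compl_iff_disjoint_left.mpr hBC)
  have hunion := card_le_card hsub
  rw [card_compl] at hunion
  have := card_union_add_card_inter A C
  omega

lemma eq_of_disjoint_union_of_ne (hα : Fintype.card α ≤ 2 * d + 1)
    (hA : #A = d) (hB : #B = d) (hC : #C = d) (hD : #D = d) (hAC : A ≠ C)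
    (hBAC : Disjoint B (A ∪ C)) (hDAC : Disjoint D (A ∪ C)) : B = D := by
  have hunion : d < #(A ∪ C) := by
    by_contra! h
    exact hAC ((eq_of_subset_of_card_le subset_union_left (by omega)).trans
      (eq_of_subset_of_card_le subset_union_right (by omega)).symm)
  have hcompl : #(A ∪ C)ᶜ ≤ d := by rw [card_compl]; omega
  have hB' : B = (A ∪ C)ᶜ :=
    eq_of_subset_of_card_le (subset_compl_iff_disjoint_right.mpr hBAC) (hcompl.trans hB.ge)
  have hD' : D = (A ∪ C)ᶜ :=
    eq_of_subset_of_card_le (subset_compl_iff_disjoint_right.mpr hDAC) (hcompl.trans hD.ge)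
  exact hB'.trans hD'.symm

end Finset

section LowerBound

variable {n d : ℕ}

lemma free_cycleGraph_three_kneser (hn : n ≤ 2 * d + 1) (hd : 2 ≤ d) :
    (cycleGraph 3).Free (kneser n d) := by
  rintro ⟨f⟩
  have adj {i j : Fin 3} (h : (cycleGraph 3).Adj i j) : Disjoint (f i).1 (f j).1 :=
    (f.toHom.map_adj h).2
  have h02 : Disjoint (f 0).1 (f 2).1 := adj (by decide)
  have := le_card_inter_add_one_of_disjoint (by simpa using hn) (f 0).2 (f 1).2 (f 2).2
    (adj (by decide)) (adj (by decide))
  rw [disjoint_iff_inter_eq_empty.mp h02, card_empty] at this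
  omega

lemma free_cycleGraph_four_kneser (hn : n ≤ 2 * d + 1) : (cycleGraph 4).Free (kneser n d) := by
  rintro ⟨f⟩
  have adj {i j : Fin 4} (h : (cycleGraph 4).Adj i j) : Disjoint (f i).1 (f j).1 :=
    (f.toHom.map_adj h).2
  have h13 : (f 1).1 = (f 3).1 :=
    eq_of_disjoint_union_of_ne (by simpa using hn) (f 0).2 (f 1).2 (f 2).2 (f 3).2
      (Subtype.val_injective.ne (f.injective.ne (by decide)))
      (disjoint_union_right.mpr ⟨adj (by decide), adj (by decide)⟩)
      (disjoint_union_right.mpr ⟨adj (by decide), adj (by decide)⟩)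
  exact f.injective.ne (by decide) (Subtype.ext h13)

lemma free_cycleGraph_five_kneser (hn : n ≤ 2 * d + 1) (hd : 3 ≤ d) :
    (cycleGraph 5).Free (kneser n d) := by
  rintro ⟨f⟩
  have adj {i j : Fin 5} (h : (cycleGraph 5).Adj i j) : Disjoint (f i).1 (f j).1 :=
    (f.toHom.map_adj h).2
  have h02 := le_card_inter_add_one_of_disjoint (by simpa using hn) (f 0).2 (f 1).2 (f 2).2
    (adj (by decide)) (adj (by decide))
  have h24 := le_card_inter_add_one_of_disjoint (by simpa using hn) (f 2).2 (f 3).2 (f 4).2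
    (adj (by decide)) (adj (by decide))
  have h40 : Disjoint (f 4).1 (f 0).1 := adj (by decide)
  have hsub : (f 0).1 ∩ (f 2).1 ∪ (f 2).1 ∩ (f 4).1 ⊆ (f 2).1 :=
    union_subset inter_subset_right inter_subset_left
  have hcard := card_le_card hsub
  rw [card_union_of_disjoint (h40.symm.mono inter_subset_left inter_subset_right), (f 2).2] at hcard
  omega

lemma six_le_egirth_kneser (hn : n ≤ 2 * d + 1) (hd : 3 ≤ d) : 6 ≤ (kneser n d).egirth := by
  refine le_egirth.mpr fun a w hw => ?_
  have hcopy := (cycleGraph_isContained_iff hw.three_le_length).mpr ⟨a, w, hw, rfl⟩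
  have h3 := hw.three_le_length
  generalize w.length = m at hcopy h3
  by_contra! h6
  norm_cast at h6
  interval_cases m
  exacts [free_cycleGraph_three_kneser hn (by omega) hcopy, free_cycleGraph_four_kneser hn hcopy,
    free_cycleGraph_five_kneser hn hd hcopy]

end LowerBound

section Hexagon

variable {α ι κ : Type*} [DecidableEq α] {side : ι → Finset α} {e : κ → α}

lemma disjoint_insert_insert (hside : Pairwise (Disjoint on side)) (he : Injective e)
    (hes : ∀ p q, e q ∉ side p) {p p' : ι} {q q' : κ} (hp : p ≠ p') (hq : q ≠ q') :
    Disjoint (insert (e q) (side p)) (insert (e q') (side p')) := by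
  rw [disjoint_insert_left, disjoint_insert_right, mem_insert, not_or]
  exact ⟨⟨he.ne hq, hes p' q⟩, hes p q', hside hp⟩

lemma injective_insert_side (hside : Pairwise (Disjoint on side)) (hne : ∀ p, (side p).Nonempty)
    (he : Injective e) (hes : ∀ p q, e q ∉ side p) :
    Injective fun x : ι × κ => insert (e x.2) (side x.1) := by
  rintro ⟨p, q⟩ ⟨p', q'⟩ h
  dsimp only at h
  obtain rfl : p = p' := by
    by_contra hp
    obtain ⟨s, hs⟩ := hne p
    rcases mem_insert.mp (h ▸ mem_insert_of_mem hs) with rfl | hs'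
    · exact hes p q' hs
    · exact disjoint_left.mp (hside hp) hs hs'
  rcases mem_insert.mp (h ▸ mem_insert_self (e q) (side p)) with hq | hq
  · rw [he hq]
  · exact absurd hq (hes p q)

end Hexagon

section UpperBound

variable {n d : ℕ}

lemma kneser_adj_of_disjoint (hd : d ≠ 0) {A B : {s : Finset (Fin n) // #s = d}}
    (h : Disjoint A.1 B.1) : (kneser n d).Adj A B := by
  refine ⟨fun hAB => hd ?_, h⟩
  subst hAB
  rw [← A.2, disjoint_self.mp h, bot_eq_empty, card_empty]

lemma cycleGraph_six_isContained_kneser_of_sides {side : Fin 2 → Finset (Fin n)}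
    {e : Fin 3 ↪ Fin n} (hd : 2 ≤ d) (hside : Pairwise (Disjoint on side))
    (hes : ∀ p q, e q ∉ side p) (hcard : ∀ p, #(side p) + 1 = d) :
    cycleGraph 6 ⊑ kneser n d := by
  have hne (p) : (side p).Nonempty := card_pos.mp (by have := hcard p; omega)
  have hcard' (p q) : #(insert (e q) (side p)) = d := by
    rw [card_insert_of_notMem (hes p q), hcard]
  -- the Chinese remainder bijection `Fin 6 ≃ Fin 2 × Fin 3`
  let idx (i : Fin 6) : Fin 2 × Fin 3 := (Fin.ofNat 2 i, Fin.ofNat 3 i)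
  have hidx_inj : Injective idx := by decide
  have hidx_adj : ∀ i j, (cycleGraph 6).Adj i j →
      (idx i).1 ≠ (idx j).1 ∧ (idx i).2 ≠ (idx j).2 := by
    decide
  let v (i : Fin 6) : {s : Finset (Fin n) // #s = d} :=
    ⟨insert (e (idx i).2) (side (idx i).1), hcard' _ _⟩
  refine ⟨⟨⟨v, fun {i j} h => ?_⟩, ?_⟩⟩
  · exact kneser_adj_of_disjoint (by omega)
      (disjoint_insert_insert hside e.injective hes (hidx_adj i j h).1 (hidx_adj i j h).2)
  · intro i j h
    exact hidx_inj (injective_insert_side hside hne e.injective hes (congrArg Subtype.val h))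

lemma cycleGraph_six_isContained_kneser (hn : 2 * d + 1 ≤ n) (hd : 2 ≤ d) :
    cycleGraph 6 ⊑ kneser n d := by
  let e : Fin 3 ↪ Fin n := Fin.castLEEmb (by omega)
  have hR : #(univ.map e)ᶜ = n - 3 := by
    rw [card_compl, card_map, card_univ, Fintype.card_fin, Fintype.card_fin]
  obtain ⟨S, hS, hSc⟩ := exists_subset_card_eq (s := (univ.map e)ᶜ) (n := d - 1) (by omega)
  obtain ⟨T, hT, hTc⟩ := exists_subset_card_eq (s := (univ.map e)ᶜ \ S) (n := d - 1)
    (by rw [card_sdiff_of_subset hS, hR]; omega)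
  have hST : Disjoint S T := disjoint_of_subset_right hT disjoint_sdiff
  refine cycleGraph_six_isContained_kneser_of_sides (side := ![S, T]) (e := e) hd ?_ ?_ ?_
  · intro p p' h
    fin_cases p <;> fin_cases p' <;> simp_all [onFun, hST.symm]
  · intro p q
    fin_cases p
    · exact fun h => mem_compl.mp (hS h) (mem_map_of_mem e (mem_univ q))
    · exact fun h => mem_compl.mp (mem_sdiff.mp (hT h)).1 (mem_map_of_mem e (mem_univ q))
  · intro p
    fin_cases p <;> simp only [Fin.zero_eta, Fin.mk_one, Matrix.cons_val_zero, Matrix.cons_val_one,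
      hSc, hTc] <;> omega

lemma egirth_kneser_le_six (hn : 2 * d + 1 ≤ n) (hd : 2 ≤ d) : (kneser n d).egirth ≤ 6 := by
  obtain ⟨a, w, hw, hlen⟩ :=
    (cycleGraph_isContained_iff (by norm_num)).mp (cycleGraph_six_isContained_kneser hn hd)
  simpa [hlen] using egirth_le_length hw

end UpperBound

/-- For `d ≥ 3`, the Kneser graph `K(2d+1,d)` has girth 6. -/
theorem kneser_girth (d : ℕ) (hd : 3 ≤ d) : (kneser (2 * d + 1) d).girth = 6 := by
  have h : (kneser (2 * d + 1) d).egirth = 6 :=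
    le_antisymm (egirth_kneser_le_six le_rfl (by omega)) (six_le_egirth_kneser le_rfl hd)
  rw [girth, h]
  rfl
end

section
/- Let X be the set of d-subsets of a 3d-element set Z, and define G = ⟨X ∣ x² = 1, and xyz = 1 whenever {x, y, z} is a partition of Z into three d-subsets⟩. Then G is abelian; consequently, since each generator has order 2, G is an elementary abelian 2-group. -/
set_option maxHeartbeats 1000000


open Finset

/-- The `d`-subsets of a `3d`-set. -/
def KSub (d : ℕ) := {s : Finset (Fin (3 * d)) // s.card = d}

instance (d : ℕ) : DecidableEq (KSub d) := by unfold KSub; infer_instance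
instance (d : ℕ) : Fintype (KSub d) := by unfold KSub; infer_instance

/-- Relators: `x²` for every `d`-subset `x`, and `xyz` for every partition `{x,y,z}`
of the `3d`-set into three `d`-subsets. -/
def knRels (d : ℕ) : Set (FreeGroup (KSub d)) :=
  {r | (∃ x : KSub d, r = FreeGroup.of x * FreeGroup.of x) ∨
    (∃ x y z : KSub d, Disjoint x.val y.val ∧ Disjoint x.val z.val ∧
      Disjoint y.val z.val ∧ x.val ∪ y.val ∪ z.val = Finset.univ ∧
      r = FreeGroup.of x * FreeGroup.of y * FreeGroup.of z)}

/-- The group `G = ⟨X ∣ x² = 1, xyz = 1 for partitions {x,y,z}⟩`. -/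
def knGroup (d : ℕ) : Type := PresentedGroup (knRels d)

noncomputable instance (d : ℕ) : Group (knGroup d) := by unfold knGroup; infer_instance

namespace KnAux

variable {d : ℕ}

/-- Any relator maps to `1` in the presented group. -/
lemma rel_eq_one {r : FreeGroup (KSub d)} (hr : r ∈ knRels d) :
    PresentedGroup.mk (knRels d) r = 1 :=
  (QuotientGroup.eq_one_iff r).mpr (Subgroup.subset_normalClosure hr)

/-- Each generator is an involution. -/
lemma sq (x : KSub d) :
    (PresentedGroup.of x : PresentedGroup (knRels d)) * PresentedGroup.of x = 1 := by
  have h := rel_eq_one (Or.inl ⟨x, rfl⟩ : _ ∈ knRels d)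
  rwa [map_mul] at h

/-- For a partition `{x, y, z}` of the ground set into `d`-sets, `x * y = z`. -/
lemma mul_of (x y z : Finset (Fin (3 * d))) (hx : x.card = d) (hy : y.card = d)
    (hz : z.card = d) (h1 : Disjoint x y) (h2 : Disjoint x z) (h3 : Disjoint y z)
    (hu : x ∪ y ∪ z = Finset.univ) :
    (PresentedGroup.of ⟨x, hx⟩ : PresentedGroup (knRels d)) * PresentedGroup.of ⟨y, hy⟩ =
      PresentedGroup.of ⟨z, hz⟩ := by
  have h := rel_eq_one (Or.inr ⟨⟨x, hx⟩, ⟨y, hy⟩, ⟨z, hz⟩, h1, h2, h3, hu, rfl⟩ : _ ∈ knRels d)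
  rw [map_mul, map_mul] at h
  have hzz : PresentedGroup.mk (knRels d) (FreeGroup.of ⟨z, hz⟩) *
      PresentedGroup.mk (knRels d) (FreeGroup.of ⟨z, hz⟩) = 1 := sq (⟨z, hz⟩ : KSub d)
  have h' := eq_inv_of_mul_eq_one_left h
  rw [inv_eq_of_mul_eq_one_right hzz] at h'
  exact h'

lemma swapper {H : Type*} [Group H] (a b c s : H) (h5 : b * a = s) (h6 : a * s = b) :
    (a * b) * (a * c) = b * c := by
  rw [mul_assoc, ← mul_assoc b a c, h5, ← mul_assoc, h6]

lemma cancel {H : Type*} [Group H] (a b c : H) (hb : b * b = 1) :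
    (a * b) * (b * c) = a * c := by
  rw [mul_assoc, ← mul_assoc b b c, hb, one_mul]

lemma disj_union {α : Type*} [DecidableEq α] {a b c e : Finset α} (h1 : Disjoint a c)
    (h2 : Disjoint a e) (h3 : Disjoint b c) (h4 : Disjoint b e) :
    Disjoint (a ∪ b) (c ∪ e) := by
  simp only [disjoint_union_left, disjoint_union_right]
  exact ⟨⟨h1, h3⟩, h2, h4⟩

/-- The key combinatorial commutation: if the ground set splits into six blocks
`E F G R S T` with `|E|=|F|=|G|=e`, `|R|=|S|=|T|=d-e`, then the generators
`E ∪ R` and `E ∪ S` commute. -/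
lemma block_comm (e : ℕ) (he : e ≤ d) (E F G R S T : Finset (Fin (3 * d)))
    (hE : E.card = e) (hF : F.card = e) (hG : G.card = e)
    (hR : R.card = d - e) (hS : S.card = d - e) (hT : T.card = d - e)
    (dEF : Disjoint E F) (dEG : Disjoint E G) (dER : Disjoint E R)
    (dES : Disjoint E S) (dET : Disjoint E T)
    (dFG : Disjoint F G) (dFR : Disjoint F R) (dFS : Disjoint F S) (dFT : Disjoint F T)
    (dGR : Disjoint G R) (dGS : Disjoint G S) (dGT : Disjoint G T)
    (dRS : Disjoint R S) (dRT : Disjoint R T) (dST : Disjoint S T)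
    (hU : E ∪ F ∪ G ∪ R ∪ S ∪ T = Finset.univ)
    (hAc : (E ∪ R).card = d) (hBc : (E ∪ S).card = d) :
    (PresentedGroup.of ⟨E ∪ R, hAc⟩ : PresentedGroup (knRels d)) * PresentedGroup.of ⟨E ∪ S, hBc⟩
      = PresentedGroup.of ⟨E ∪ S, hBc⟩ * PresentedGroup.of ⟨E ∪ R, hAc⟩ := by
  have cET : (E ∪ T).card = d := by rw [card_union_of_disjoint dET]; omega
  have cFR : (F ∪ R).card = d := by rw [card_union_of_disjoint dFR]; omega
  have cFS : (F ∪ S).card = d := by rw [card_union_of_disjoint dFS]; omega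
  have cFT : (F ∪ T).card = d := by rw [card_union_of_disjoint dFT]; omega
  have cGR : (G ∪ R).card = d := by rw [card_union_of_disjoint dGR]; omega
  have cGS : (G ∪ S).card = d := by rw [card_union_of_disjoint dGS]; omega
  have cGT : (G ∪ T).card = d := by rw [card_union_of_disjoint dGT]; omega
  -- the "grid" generators: m i j = (i-th small block) ∪ (j-th big block), smalls E,F,G and
  -- bigs R,S,T; the relators give m i j * m k l = m m' n' whenever {i,k,m'} = {j,l,n'} = {1,2,3}.
  have h1 : (PresentedGroup.of ⟨F ∪ S, cFS⟩ : PresentedGroup (knRels d)) *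
      PresentedGroup.of ⟨G ∪ T, cGT⟩ = PresentedGroup.of ⟨E ∪ R, hAc⟩ :=
    mul_of _ _ _ _ _ _
      (by apply disj_union <;> first | assumption | exact Disjoint.symm (by assumption))
      (by apply disj_union <;> first | assumption | exact Disjoint.symm (by assumption))
      (by apply disj_union <;> first | assumption | exact Disjoint.symm (by assumption))
      (by rw [← hU]; ext a; simp only [Finset.mem_union]; tauto)
  have h2 : (PresentedGroup.of ⟨G ∪ T, cGT⟩ : PresentedGroup (knRels d)) *
      PresentedGroup.of ⟨F ∪ R, cFR⟩ = PresentedGroup.of ⟨E ∪ S, hBc⟩ :=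
    mul_of _ _ _ _ _ _
      (by apply disj_union <;> first | assumption | exact Disjoint.symm (by assumption))
      (by apply disj_union <;> first | assumption | exact Disjoint.symm (by assumption))
      (by apply disj_union <;> first | assumption | exact Disjoint.symm (by assumption))
      (by rw [← hU]; ext a; simp only [Finset.mem_union]; tauto)
  have h3 : (PresentedGroup.of ⟨E ∪ T, cET⟩ : PresentedGroup (knRels d)) *
      PresentedGroup.of ⟨G ∪ R, cGR⟩ = PresentedGroup.of ⟨F ∪ S, cFS⟩ :=
    mul_of _ _ _ _ _ _
      (by apply disj_union <;> first | assumption | exact Disjoint.symm (by assumption))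
      (by apply disj_union <;> first | assumption | exact Disjoint.symm (by assumption))
      (by apply disj_union <;> first | assumption | exact Disjoint.symm (by assumption))
      (by rw [← hU]; ext a; simp only [Finset.mem_union]; tauto)
  have h4 : (PresentedGroup.of ⟨E ∪ T, cET⟩ : PresentedGroup (knRels d)) *
      PresentedGroup.of ⟨G ∪ S, cGS⟩ = PresentedGroup.of ⟨F ∪ R, cFR⟩ :=
    mul_of _ _ _ _ _ _
      (by apply disj_union <;> first | assumption | exact Disjoint.symm (by assumption))
      (by apply disj_union <;> first | assumption | exact Disjoint.symm (by assumption))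
      (by apply disj_union <;> first | assumption | exact Disjoint.symm (by assumption))
      (by rw [← hU]; ext a; simp only [Finset.mem_union]; tauto)
  have h5 : (PresentedGroup.of ⟨G ∪ R, cGR⟩ : PresentedGroup (knRels d)) *
      PresentedGroup.of ⟨E ∪ T, cET⟩ = PresentedGroup.of ⟨F ∪ S, cFS⟩ :=
    mul_of _ _ _ _ _ _
      (by apply disj_union <;> first | assumption | exact Disjoint.symm (by assumption))
      (by apply disj_union <;> first | assumption | exact Disjoint.symm (by assumption))
      (by apply disj_union <;> first | assumption | exact Disjoint.symm (by assumption))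
      (by rw [← hU]; ext a; simp only [Finset.mem_union]; tauto)
  have h6 : (PresentedGroup.of ⟨E ∪ T, cET⟩ : PresentedGroup (knRels d)) *
      PresentedGroup.of ⟨F ∪ S, cFS⟩ = PresentedGroup.of ⟨G ∪ R, cGR⟩ :=
    mul_of _ _ _ _ _ _
      (by apply disj_union <;> first | assumption | exact Disjoint.symm (by assumption))
      (by apply disj_union <;> first | assumption | exact Disjoint.symm (by assumption))
      (by apply disj_union <;> first | assumption | exact Disjoint.symm (by assumption))
      (by rw [← hU]; ext a; simp only [Finset.mem_union]; tauto)
  have h7 : (PresentedGroup.of ⟨E ∪ S, hBc⟩ : PresentedGroup (knRels d)) *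
      PresentedGroup.of ⟨F ∪ T, cFT⟩ = PresentedGroup.of ⟨G ∪ R, cGR⟩ :=
    mul_of _ _ _ _ _ _
      (by apply disj_union <;> first | assumption | exact Disjoint.symm (by assumption))
      (by apply disj_union <;> first | assumption | exact Disjoint.symm (by assumption))
      (by apply disj_union <;> first | assumption | exact Disjoint.symm (by assumption))
      (by rw [← hU]; ext a; simp only [Finset.mem_union]; tauto)
  have h8 : (PresentedGroup.of ⟨F ∪ T, cFT⟩ : PresentedGroup (knRels d)) *
      PresentedGroup.of ⟨E ∪ R, hAc⟩ = PresentedGroup.of ⟨G ∪ S, cGS⟩ :=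
    mul_of _ _ _ _ _ _
      (by apply disj_union <;> first | assumption | exact Disjoint.symm (by assumption))
      (by apply disj_union <;> first | assumption | exact Disjoint.symm (by assumption))
      (by apply disj_union <;> first | assumption | exact Disjoint.symm (by assumption))
      (by rw [← hU]; ext a; simp only [Finset.mem_union]; tauto)
  calc (PresentedGroup.of ⟨E ∪ R, hAc⟩ : PresentedGroup (knRels d)) *
        PresentedGroup.of ⟨E ∪ S, hBc⟩
      = (PresentedGroup.of ⟨F ∪ S, cFS⟩ * PresentedGroup.of ⟨G ∪ T, cGT⟩) *
        (PresentedGroup.of ⟨G ∪ T, cGT⟩ * PresentedGroup.of ⟨F ∪ R, cFR⟩) := by rw [h1, h2]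
    _ = PresentedGroup.of ⟨F ∪ S, cFS⟩ * PresentedGroup.of ⟨F ∪ R, cFR⟩ :=
        cancel _ _ _ (sq ⟨G ∪ T, cGT⟩)
    _ = (PresentedGroup.of ⟨E ∪ T, cET⟩ * PresentedGroup.of ⟨G ∪ R, cGR⟩) *
        (PresentedGroup.of ⟨E ∪ T, cET⟩ * PresentedGroup.of ⟨G ∪ S, cGS⟩) := by rw [h3, h4]
    _ = PresentedGroup.of ⟨G ∪ R, cGR⟩ * PresentedGroup.of ⟨G ∪ S, cGS⟩ :=
        swapper _ _ _ _ h5 h6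
    _ = (PresentedGroup.of ⟨E ∪ S, hBc⟩ * PresentedGroup.of ⟨F ∪ T, cFT⟩) *
        (PresentedGroup.of ⟨F ∪ T, cFT⟩ * PresentedGroup.of ⟨E ∪ R, hAc⟩) := by rw [h7, h8]
    _ = PresentedGroup.of ⟨E ∪ S, hBc⟩ * PresentedGroup.of ⟨E ∪ R, hAc⟩ :=
        cancel _ _ _ (sq ⟨F ∪ T, cFT⟩)

/-- Any two generators commute. -/
lemma gen_comm (A B : KSub d) :
    (PresentedGroup.of A : PresentedGroup (knRels d)) * PresentedGroup.of B =
      PresentedGroup.of B * PresentedGroup.of A := by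
  classical
  obtain ⟨As, hAs⟩ := A
  obtain ⟨Bs, hBs⟩ := B
  have he : (As ∩ Bs).card ≤ d :=
    le_trans (card_le_card inter_subset_left) (le_of_eq hAs)
  have hR : (As \ Bs).card = d - (As ∩ Bs).card := by
    have h2 := card_sdiff_add_card_inter As Bs
    omega
  have hS : (Bs \ As).card = d - (As ∩ Bs).card := by
    have h2 := card_sdiff_add_card_inter Bs As
    rw [inter_comm Bs As] at h2
    omega
  have hABcard : (As ∪ Bs).card = 2 * d - (As ∩ Bs).card := by
    have h2 := card_union_add_card_inter As Bs
    omega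
  have hCompcard : ((As ∪ Bs)ᶜ : Finset (Fin (3 * d))).card = d + (As ∩ Bs).card := by
    rw [card_compl, Fintype.card_fin, hABcard]
    omega
  obtain ⟨F, hFsub, hF⟩ := exists_subset_card_eq (s := ((As ∪ Bs)ᶜ)) (n := (As ∩ Bs).card) (by omega)
  obtain ⟨G, hGsub, hG⟩ := exists_subset_card_eq (s := ((As ∪ Bs)ᶜ \ F)) (n := (As ∩ Bs).card)
    (by rw [card_sdiff_of_subset hFsub]; omega)
  have hT : (((As ∪ Bs)ᶜ \ F) \ G).card = d - (As ∩ Bs).card := by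
    rw [card_sdiff_of_subset hGsub, card_sdiff_of_subset hFsub]
    omega
  -- memberships
  have hFc : ∀ a ∈ F, a ∉ As ∧ a ∉ Bs := by
    intro a ha
    have h2 := hFsub ha
    simp only [mem_compl, mem_union] at h2
    tauto
  have hGc : ∀ a ∈ G, (a ∉ As ∧ a ∉ Bs) ∧ a ∉ F := by
    intro a ha
    have h2 := hGsub ha
    simp only [mem_sdiff, mem_compl, mem_union] at h2
    tauto
  have hTc : ∀ a ∈ ((As ∪ Bs)ᶜ \ F) \ G, ((a ∉ As ∧ a ∉ Bs) ∧ a ∉ F) ∧ a ∉ G := by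
    intro a ha
    simp only [mem_sdiff, mem_compl, mem_union] at ha
    tauto
  -- disjointness
  have dEF : Disjoint (As ∩ Bs) F := disjoint_left.mpr fun a haE haF =>
    (hFc a haF).1 (mem_of_mem_inter_left haE)
  have dEG : Disjoint (As ∩ Bs) G := disjoint_left.mpr fun a haE haG =>
    (hGc a haG).1.1 (mem_of_mem_inter_left haE)
  have dET : Disjoint (As ∩ Bs) (((As ∪ Bs)ᶜ \ F) \ G) := disjoint_left.mpr fun a haE haT =>
    (hTc a haT).1.1.1 (mem_of_mem_inter_left haE)
  have dER : Disjoint (As ∩ Bs) (As \ Bs) := disjoint_left.mpr fun a haE haR =>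
    (mem_sdiff.mp haR).2 (mem_inter.mp haE).2
  have dES : Disjoint (As ∩ Bs) (Bs \ As) := disjoint_left.mpr fun a haE haS =>
    (mem_sdiff.mp haS).2 (mem_inter.mp haE).1
  have dRS : Disjoint (As \ Bs) (Bs \ As) := disjoint_left.mpr fun a haR haS =>
    (mem_sdiff.mp haS).2 (mem_sdiff.mp haR).1
  have dFR : Disjoint F (As \ Bs) := disjoint_left.mpr fun a haF haR =>
    (hFc a haF).1 (mem_sdiff.mp haR).1
  have dFS : Disjoint F (Bs \ As) := disjoint_left.mpr fun a haF haS =>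
    (hFc a haF).2 (mem_sdiff.mp haS).1
  have dGR : Disjoint G (As \ Bs) := disjoint_left.mpr fun a haG haR =>
    (hGc a haG).1.1 (mem_sdiff.mp haR).1
  have dGS : Disjoint G (Bs \ As) := disjoint_left.mpr fun a haG haS =>
    (hGc a haG).1.2 (mem_sdiff.mp haS).1
  have dTR : Disjoint (((As ∪ Bs)ᶜ \ F) \ G) (As \ Bs) := disjoint_left.mpr fun a haT haR =>
    (hTc a haT).1.1.1 (mem_sdiff.mp haR).1
  have dTS : Disjoint (((As ∪ Bs)ᶜ \ F) \ G) (Bs \ As) := disjoint_left.mpr fun a haT haS =>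
    (hTc a haT).1.1.2 (mem_sdiff.mp haS).1
  have dFG : Disjoint F G := disjoint_left.mpr fun a haF haG => (hGc a haG).2 haF
  have dFT : Disjoint F (((As ∪ Bs)ᶜ \ F) \ G) := disjoint_left.mpr fun a haF haT =>
    (hTc a haT).1.2 haF
  have dGT : Disjoint G (((As ∪ Bs)ᶜ \ F) \ G) := disjoint_left.mpr fun a haG haT =>
    (hTc a haT).2 haG
  -- the six blocks cover everything
  have hU : (As ∩ Bs) ∪ F ∪ G ∪ (As \ Bs) ∪ (Bs \ As) ∪ (((As ∪ Bs)ᶜ \ F) \ G) =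
      Finset.univ := by
    apply eq_univ_of_forall
    intro a
    simp only [mem_union, mem_inter, mem_sdiff, mem_compl, mem_union]
    by_cases hA : a ∈ As <;> by_cases hB : a ∈ Bs <;>
      by_cases hF' : a ∈ F <;> by_cases hG' : a ∈ G <;> tauto
  have hAval : As = (As ∩ Bs) ∪ (As \ Bs) := by
    ext a
    simp only [mem_union, mem_inter, mem_sdiff]
    tauto
  have hBval : Bs = (As ∩ Bs) ∪ (Bs \ As) := by
    ext a
    simp only [mem_union, mem_inter, mem_sdiff]
    tauto
  have hAc : ((As ∩ Bs) ∪ (As \ Bs)).card = d := hAval ▸ hAs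
  have hBc : ((As ∩ Bs) ∪ (Bs \ As)).card = d := hBval ▸ hBs
  have key := block_comm (As ∩ Bs).card he (As ∩ Bs) F G (As \ Bs) (Bs \ As)
    (((As ∪ Bs)ᶜ \ F) \ G) rfl hF hG hR hS hT dEF dEG dER dES dET dFG dFR dFS
    dFT dGR dGS dGT dRS dTR.symm dTS.symm hU hAc hBc
  have hA' : (⟨As, hAs⟩ : KSub d) = ⟨(As ∩ Bs) ∪ (As \ Bs), hAc⟩ := Subtype.ext hAval
  have hB' : (⟨Bs, hBs⟩ : KSub d) = ⟨(As ∩ Bs) ∪ (Bs \ As), hBc⟩ := Subtype.ext hBval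
  rw [hA', hB']
  exact key

/-- The presented group is commutative. -/
lemma comm_all (g h : PresentedGroup (knRels d)) : g * h = h * g := by
  have step1 : ∀ (x : KSub d) (k : PresentedGroup (knRels d)),
      PresentedGroup.of x * k = k * PresentedGroup.of x := by
    intro x k
    have hk : k ∈ Subgroup.centralizer {(PresentedGroup.of x : PresentedGroup (knRels d))} := by
      apply PresentedGroup.generated_by
      intro j
      rw [Subgroup.mem_centralizer_iff]
      intro y hy
      rw [Set.mem_singleton_iff] at hy
      rw [hy]
      exact gen_comm x j
    have := Subgroup.mem_centralizer_iff.mp hk (PresentedGroup.of x) rfl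
    exact this
  have hg : g ∈ Subgroup.centralizer {h} := by
    apply PresentedGroup.generated_by
    intro j
    rw [Subgroup.mem_centralizer_iff]
    intro y hy
    rw [Set.mem_singleton_iff] at hy
    rw [hy]
    exact (step1 j h).symm
  exact (Subgroup.mem_centralizer_iff.mp hg h rfl).symm

/-- Every element squares to one. -/
lemma sq_all (g : PresentedGroup (knRels d)) : g * g = 1 := by
  let H : Subgroup (PresentedGroup (knRels d)) :=
    { carrier := {g | g * g = 1}
      one_mem' := by simp
      mul_mem' := by
        intro a b ha hb
        simp only [Set.mem_setOf_eq] at ha hb ⊢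
        rw [mul_assoc, ← mul_assoc b a b, comm_all b a, mul_assoc a b b, hb, mul_one, ha]
      inv_mem' := by
        intro a ha
        simp only [Set.mem_setOf_eq] at ha ⊢
        rw [← mul_inv_rev, ha, inv_one] }
  have : g ∈ H := by
    apply PresentedGroup.generated_by
    intro j
    exact sq j
  exact this

end KnAux

/-- The group `G` generated by the `d`-subsets of a `3d`-set, with relations `x² = 1` and
`xyz = 1` for each partition `{x,y,z}` into `d`-subsets, is abelian; since each generator
has order 2, it is an elementary abelian 2-group. -/
theorem knGroup_abelian (d : ℕ) :
    (∀ g h : knGroup d, g * h = h * g) ∧ (∀ g : knGroup d, g * g = 1) := by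
  exact ⟨fun g h => KnAux.comm_all g h, fun g => KnAux.sq_all g⟩
end

section
/- Let X be the d-subsets of a 3d-set and G the group generated by X with relations x² = 1 and xyz = 1 for each partition {x,y,z} of the 3d-set into d-subsets. Then G has order at most 2^{3d-1}. -/
open Finset

/-!
Since the generators are involutions, the relation for a partition `{x, y, z}` reads
`g x * g y = g z`. Two partitions sharing the block `z` show that `g x * g y` does not change
when the common part `x ∩ y` is exchanged for a disjoint set of the same size, so it depends
only on `(x \ y, y \ x)`; this forces `G` to be abelian. Fixing a point `p`, moving `x` to `y`
one point at a time writes `g x * g y` as a product of the `3d - 1` elements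
`g (insert p c) * g (insert j c)`, `j ≠ p`, and each `g x` is such a product `g y * g z`.
Hence `G` is an elementary abelian `2`-group generated by `3d - 1` elements.
-/
theorem Finset.exists_disjoint_card_eq {α : Type*} [Fintype α] [DecidableEq α] {s : Finset α}
    {n : ℕ} (h : n + #s ≤ Fintype.card α) : ∃ t, Disjoint s t ∧ #t = n := by
  obtain ⟨t, hts, ht⟩ := exists_subset_card_eq (s := sᶜ) (n := n) (by rw [card_compl]; omega)
  exact ⟨t, disjoint_of_subset_right hts disjoint_compl_right, ht⟩

theorem card_le_two_pow_of_closure_range_eq_top {G ι : Type*} [CommGroup G] [Fintype ι]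
    {e : ι → G} (he : ∀ i, e i * e i = 1) (h : Subgroup.closure (Set.range e) = ⊤) :
    Nat.card G ≤ 2 ^ Fintype.card ι := by
  classical
  have hprod : ∀ g : G, ∃ t : Finset ι, ∏ i ∈ t, e i = g := by
    have step : ∀ i g, (∃ t : Finset ι, ∏ i ∈ t, e i = g) →
        ∃ t : Finset ι, ∏ i ∈ t, e i = e i * g := by
      rintro i _ ⟨t, rfl⟩
      by_cases hi : i ∈ t
      · refine ⟨t.erase i, ?_⟩
        rw [← mul_prod_erase t e hi, ← mul_assoc, he, one_mul]
      · exact ⟨insert i t, prod_insert hi⟩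
    intro g
    induction h ▸ Subgroup.mem_top g using Subgroup.closure_induction_left with
    | one => exact ⟨∅, prod_empty⟩
    | mul_left _ hx _ _ ih =>
      obtain ⟨i, rfl⟩ := hx
      exact step i _ ih
    | inv_mul_cancel _ hx _ _ ih =>
      obtain ⟨i, rfl⟩ := hx
      rw [inv_eq_of_mul_eq_one_right (he i)]
      exact step i _ ih
  calc Nat.card G ≤ Nat.card (Finset ι) :=
        Nat.card_le_card_of_surjective (fun t => ∏ i ∈ t, e i) hprod
    _ = 2 ^ Fintype.card ι := by rw [Nat.card_eq_fintype_card, Fintype.card_finset]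

namespace knGroup

variable {d : ℕ}

/-- The generator of the `d`-subset `s`, extended by `1` to the other finsets so that identities
between finsets can be rewritten without carrying cardinality proofs. -/
noncomputable def gen (s : Finset (Fin (3 * d))) : knGroup d :=
  if h : #s = d then PresentedGroup.of (rels := knRels d) ⟨s, h⟩ else 1

theorem gen_of_card_eq {s : Finset (Fin (3 * d))} (h : #s = d) :
    gen s = PresentedGroup.of (rels := knRels d) ⟨s, h⟩ :=
  dif_pos h

theorem gen_of_card_ne {s : Finset (Fin (3 * d))} (h : #s ≠ d) : gen s = 1 :=
  dif_neg h

theorem gen_mul_self (s : Finset (Fin (3 * d))) : gen s * gen s = 1 := by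
  by_cases h : #s = d
  · rw [gen_of_card_eq h]
    exact PresentedGroup.one_of_mem (Or.inl ⟨_, rfl⟩)
  · rw [gen_of_card_ne h, one_mul]

theorem gen_inv (s : Finset (Fin (3 * d))) : (gen s)⁻¹ = gen s :=
  inv_eq_of_mul_eq_one_right (gen_mul_self s)

theorem card_compl_union_eq {x y : Finset (Fin (3 * d))} (hx : #x = d) (hy : #y = d)
    (h : Disjoint x y) : #(x ∪ y)ᶜ = d := by
  rw [card_compl, Fintype.card_fin, card_union_of_disjoint h]; omega

theorem gen_mul_gen_of_disjoint {x y : Finset (Fin (3 * d))} (hx : #x = d) (hy : #y = d)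
    (h : Disjoint x y) : gen x * gen y = gen (x ∪ y)ᶜ := by
  have hz := card_compl_union_eq hx hy h
  have rel : gen x * gen y * gen (x ∪ y)ᶜ = 1 := by
    rw [gen_of_card_eq hx, gen_of_card_eq hy, gen_of_card_eq hz]
    exact PresentedGroup.one_of_mem <| Or.inr ⟨_, _, _, h,
      disjoint_compl_right.mono_left subset_union_left,
      disjoint_compl_right.mono_left subset_union_right, union_compl _, rfl⟩
  rw [eq_inv_of_mul_eq_one_left rel, gen_inv]

section Exchange

variable {x y u v b : Finset (Fin (3 * d))}

theorem card_sdiff_union_eq (hy : #y = d) (hb : Disjoint (x ∪ y) b) (hbc : #b = #(x ∩ y)) :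
    #(y \ x ∪ b) = d := by
  have := card_sdiff_add_card_inter y x
  rw [card_union_of_disjoint (hb.mono_left (sdiff_subset.trans subset_union_right)), hbc,
    inter_comm]
  omega

theorem gen_mul_gen_eq_exchange (hx : #x = d) (hy : #y = d) (hb : Disjoint (x ∪ y) b)
    (hbc : #b = #(x ∩ y)) : gen x * gen y = gen (y \ x ∪ b) * gen (x \ y ∪ b) := by
  have hxb := disjoint_left.mp hb
  have hy' := card_sdiff_union_eq hy hb hbc
  have hx' := card_sdiff_union_eq hx (union_comm x y ▸ hb) (inter_comm x y ▸ hbc)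
  have hsize : #(x ∪ y) + #(x ∩ y) = 2 * d := by rw [card_union_add_card_inter]; omega
  have hz : #(x ∪ y ∪ b)ᶜ = d := by
    rw [card_compl, Fintype.card_fin, card_union_of_disjoint hb]; omega
  -- `{x, (x ∪ y ∪ b)ᶜ, y \ x ∪ b}` and `{y, (x ∪ y ∪ b)ᶜ, x \ y ∪ b}` are partitions
  have e1 : gen (y \ x ∪ b) * gen (x ∪ y ∪ b)ᶜ = gen x := by
    rw [gen_mul_gen_of_disjoint hy' hz (disjoint_compl_right.mono_left (by grind))]
    congr 1; ext a; have := @hxb a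
    simp only [mem_compl, mem_union, mem_sdiff] at this ⊢; tauto
  have e2 : gen (x ∪ y ∪ b)ᶜ * gen (x \ y ∪ b) = gen y := by
    rw [gen_mul_gen_of_disjoint hz hx' (disjoint_compl_left.mono_right (by grind))]
    congr 1; ext a; have := @hxb a
    simp only [mem_compl, mem_union, mem_sdiff] at this ⊢; tauto
  rw [← e1, ← e2, mul_assoc, ← mul_assoc (gen _ᶜ), gen_mul_self, one_mul]

theorem gen_mul_gen_eq_of_sdiff_eq (hx : #x = d) (hy : #y = d) (hu : #u = d) (hv : #v = d)
    (hxu : x \ y = u \ v) (hyv : y \ x = v \ u) : gen x * gen y = gen u * gen v := by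
  have hk : #(u ∩ v) = #(x ∩ y) := by
    have := card_sdiff_add_card_inter x y
    have := card_sdiff_add_card_inter u v
    rw [hxu] at *; omega
  have hsub : x ∪ y ∪ u ∪ v ⊆ x ∪ y ∪ (u ∩ v) := by
    intro a
    have h1 := Finset.ext_iff.mp hxu a
    have h2 := Finset.ext_iff.mp hyv a
    simp only [mem_union, mem_inter, mem_sdiff] at h1 h2 ⊢
    tauto
  have hroom : #(x ∩ y) + #(x ∪ y ∪ u ∪ v) ≤ Fintype.card (Fin (3 * d)) := by
    have := card_le_card hsub
    have := card_union_le (x ∪ y) (u ∩ v)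
    have := card_union_add_card_inter x y
    have := card_le_card (inter_subset_left (s₁ := x) (s₂ := y))
    rw [Fintype.card_fin]; omega
  obtain ⟨b, hb, hbc⟩ := exists_disjoint_card_eq hroom
  calc gen x * gen y = gen (y \ x ∪ b) * gen (x \ y ∪ b) :=
        gen_mul_gen_eq_exchange hx hy (hb.mono_left (by grind)) hbc
    _ = gen (v \ u ∪ b) * gen (u \ v ∪ b) := by rw [hxu, hyv]
    _ = gen u * gen v :=
        (gen_mul_gen_eq_exchange hu hv (hb.mono_left (by grind)) (hbc.trans hk.symm)).symm

theorem gen_mul_comm (x y : Finset (Fin (3 * d))) : gen x * gen y = gen y * gen x := by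
  by_cases hx : #x = d
  swap; · rw [gen_of_card_ne hx, one_mul, mul_one]
  by_cases hy : #y = d
  swap; · rw [gen_of_card_ne hy, one_mul, mul_one]
  have hroom : #(x ∩ y) + #(x ∪ y) ≤ Fintype.card (Fin (3 * d)) := by
    rw [add_comm, card_union_add_card_inter, Fintype.card_fin]; omega
  obtain ⟨b, hb, hbc⟩ := exists_disjoint_card_eq hroom
  have hxb := disjoint_left.mp hb
  rw [gen_mul_gen_eq_exchange hx hy hb hbc]
  apply gen_mul_gen_eq_of_sdiff_eq (card_sdiff_union_eq hy hb hbc)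
    (card_sdiff_union_eq hx (union_comm x y ▸ hb) (inter_comm x y ▸ hbc)) hy hx
  all_goals ext a; have := @hxb a; simp only [mem_union, mem_sdiff] at this ⊢; tauto

end Exchange

noncomputable instance : CommGroup (knGroup d) where
  mul_comm a b := by
    have htop := PresentedGroup.closure_range_of (knRels d)
    set S := Set.range (PresentedGroup.of (rels := knRels d))
    have hcomm : S ⊆ Subgroup.centralizer S := by
      rintro _ ⟨x, rfl⟩ _ ⟨y, rfl⟩
      have := gen_mul_comm (d := d) y.1 x.1
      rwa [gen_of_card_eq x.2, gen_of_card_eq y.2] at this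
    have hb : b ∈ Subgroup.centralizer S :=
      (Subgroup.closure_le _).mpr hcomm (htop ▸ Subgroup.mem_top b)
    exact (Subgroup.closure_le_centralizer_centralizer S (htop ▸ Subgroup.mem_top a) b hb).symm

section SwapGen

variable {i j : Fin (3 * d)} {c : Finset (Fin (3 * d))}

theorem exists_disjoint_card_eq_pred {s : Finset (Fin (3 * d))} (hs : #s ≤ 3) :
    ∃ c, Disjoint s c ∧ #c = d - 1 :=
  exists_disjoint_card_eq (by have := card_le_univ s; rw [Fintype.card_fin] at *; omega)

theorem card_insert_eq (hc : #c = d - 1) (hi : i ∉ c) : #(insert i c) = d := by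
  have := i.pos
  rw [card_insert_of_notMem hi, hc]; omega

/-- `gen x * gen y` for any two `d`-sets with `x \ y = {i}` and `y \ x = {j}`
(see `swapGen_eq`). -/
noncomputable def swapGen (i j : Fin (3 * d)) : knGroup d :=
  let c := (exists_disjoint_card_eq_pred (card_le_two.trans (by norm_num) : #{i, j} ≤ 3)).choose
  gen (insert i c) * gen (insert j c)

theorem swapGen_self (i : Fin (3 * d)) : swapGen i i = 1 :=
  gen_mul_self _

theorem swapGen_mul_self (i j : Fin (3 * d)) : swapGen i j * swapGen i j = 1 := by
  unfold swapGen
  rw [mul_mul_mul_comm, gen_mul_self, gen_mul_self, one_mul]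

theorem swapGen_eq (hc : #c = d - 1) (hi : i ∉ c) (hj : j ∉ c) :
    swapGen i j = gen (insert i c) * gen (insert j c) := by
  obtain ⟨hdisj, hcard⟩ :=
    (exists_disjoint_card_eq_pred (card_le_two.trans (by norm_num) : #{i, j} ≤ 3)).choose_spec
  obtain rfl | hij := eq_or_ne i j
  · rw [swapGen_self, gen_mul_self]
  have hi₀ := disjoint_left.mp hdisj (mem_insert_self i {j})
  have hj₀ := disjoint_left.mp hdisj (mem_insert_of_mem (mem_singleton_self j))
  apply gen_mul_gen_eq_of_sdiff_eq (card_insert_eq hcard hi₀) (card_insert_eq hcard hj₀)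
    (card_insert_eq hc hi) (card_insert_eq hc hj)
  · rw [insert_sdiff_insert' hij hi₀, insert_sdiff_insert' hij hi]
  · rw [insert_sdiff_insert' hij.symm hj₀, insert_sdiff_insert' hij.symm hj]

theorem swapGen_mul_swapGen (i j k : Fin (3 * d)) : swapGen i j * swapGen j k = swapGen i k := by
  obtain ⟨c, hdisj, hc⟩ := exists_disjoint_card_eq_pred (card_le_three : #{i, j, k} ≤ 3)
  have hnot := disjoint_left.mp hdisj
  rw [swapGen_eq hc (hnot (by simp)) (hnot (by simp)),
    swapGen_eq hc (hnot (by simp)) (hnot (by simp)),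
    swapGen_eq hc (hnot (by simp)) (hnot (by simp)), mul_assoc, ← mul_assoc (gen (insert j c)), gen_mul_self, one_mul]

end SwapGen

section Generation

variable {H : Subgroup (knGroup d)} (hH : ∀ i j, swapGen i j ∈ H)
include hH

theorem gen_mul_gen_mem {x y : Finset (Fin (3 * d))} (hx : #x = d) (hy : #y = d) :
    gen x * gen y ∈ H := by
  induction hn : #(x \ y) generalizing x with
  | zero =>
    rw [card_eq_zero, sdiff_eq_empty_iff_subset] at hn
    rw [eq_of_subset_of_card_le hn (hy.trans hx.symm).le, gen_mul_self]
    exact one_mem H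
  | succ n ih =>
    obtain ⟨i, hi⟩ : (x \ y).Nonempty := card_pos.mp (by omega)
    obtain ⟨j, hj⟩ : (y \ x).Nonempty :=
      card_pos.mp (by rw [← card_sdiff_comm (hx.trans hy.symm)]; omega)
    rw [mem_sdiff] at hi hj
    have hc : #(x.erase i) = d - 1 := by rw [card_erase_of_mem hi.1, hx]
    have hjc : j ∉ x.erase i := fun h => hj.2 (mem_of_mem_erase h)
    have hx' : gen x * gen y = swapGen i j * (gen (insert j (x.erase i)) * gen y) := by
      rw [swapGen_eq hc (notMem_erase i x) hjc, insert_erase hi.1, mul_assoc,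
        ← mul_assoc (gen (insert j _)), gen_mul_self, one_mul]
    rw [hx']
    refine mul_mem (hH i j) (ih (card_insert_eq hc hjc) ?_)
    rw [insert_sdiff_of_mem _ hj.1, erase_sdiff_comm, card_erase_of_mem (mem_sdiff.mpr hi), hn,
      Nat.add_sub_cancel]

theorem gen_mem (x : Finset (Fin (3 * d))) : gen x ∈ H := by
  by_cases hx : #x = d
  swap; · rw [gen_of_card_ne hx]; exact one_mem H
  obtain ⟨y, hxy, hy⟩ :=
    exists_disjoint_card_eq (s := x) (n := d) (by rw [hx, Fintype.card_fin]; omega)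
  rw [eq_mul_inv_of_mul_eq (gen_mul_gen_of_disjoint hx hy hxy), gen_inv]
  exact gen_mul_gen_mem hH (card_compl_union_eq hx hy hxy) hy

theorem eq_top_of_swapGen_mem : H = ⊤ :=
  (Subgroup.eq_top_iff' H).mpr <|
    PresentedGroup.generated_by (knRels d) H fun x => gen_of_card_eq x.2 ▸ gen_mem hH x.1

end Generation

theorem closure_range_swapGen_eq_top (p : Fin (3 * d)) :
    Subgroup.closure (Set.range fun j : {j // j ≠ p} => swapGen p j) = ⊤ := by
  apply eq_top_of_swapGen_mem
  set K := Subgroup.closure (Set.range fun j : {j // j ≠ p} => swapGen p j)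
  have hp : ∀ k, swapGen p k ∈ K := by
    intro k
    by_cases hk : k = p
    · rw [hk, swapGen_self]; exact one_mem _
    · exact Subgroup.subset_closure ⟨⟨k, hk⟩, rfl⟩
  intro i j
  have hinv : (swapGen p i)⁻¹ = swapGen i p :=
    inv_eq_of_mul_eq_one_right (by rw [swapGen_mul_swapGen, swapGen_self])
  rw [← swapGen_mul_swapGen i p j, ← hinv]
  exact mul_mem (inv_mem (hp i)) (hp j)

end knGroup

/-- The group `G` generated by the `d`-subsets of a `3d`-set, with relations `x² = 1` and
`xyz = 1` for each partition `{x,y,z}` into `d`-subsets, has order at most `2^(3d-1)`. -/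
theorem knGroup_card_le (d : ℕ) : Nat.card (knGroup d) ≤ 2 ^ (3 * d - 1) := by
  obtain rfl | hd := Nat.eq_zero_or_pos d
  · have htriv : (⊥ : Subgroup (knGroup 0)) = ⊤ :=
      knGroup.eq_top_of_swapGen_mem fun i => i.elim0
    rw [← Subgroup.card_top, ← htriv, Subgroup.card_bot]
    norm_num
  · let p : Fin (3 * d) := ⟨0, by omega⟩
    calc Nat.card (knGroup d) ≤ 2 ^ Fintype.card {j // j ≠ p} :=
          card_le_two_pow_of_closure_range_eq_top (fun j => knGroup.swapGen_mul_self p j)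
            (knGroup.closure_range_swapGen_eq_top p)
      _ = 2 ^ (3 * d - 1) := by
          rw [Fintype.card_subtype_compl, Fintype.card_fin, Fintype.card_subtype_eq]
end

section
/- With the notation of the previous context, if moreover the only weight-3 vectors in the column space of N are the columns of N themselves, then for x ≠ y in X, the images of e_x and e_y in V differ by the image of some e_z (i.e., x and y become adjacent in the Cayley graph Γ) if and only if {x, y, z} is a line of (X, L) for some z. Consequently the neighborhood of the identity vertex in Γ induces a graph isomorphic to the collinearity graph of (X, L), so Γ is locally Δ where Δ is the collinearity graph. -/
/-!
Over `F_2`, `e_x + e_y + e_z` with `x, y, z` distinct is the characteristic vector of `{x, y, z}`,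
so by the weight-3 hypothesis it lies in `col(N)` iff `{x, y, z}` is a line. The degenerate
choices `z ∈ {x, y}` leave a single `e_x`, which is not in `col(N)` either: if `x` lies on a line
`ℓ`, then `e_x + χ_ℓ ∈ col(N)` would have weight 2, and if `x` lies on no line, every vector of
`col(N)` vanishes at `x`. The absence of weight-2 vectors also makes `x ↦ v + [e_x]` injective, so
it maps `X` bijectively onto the neighbourhood of `v` in `Γ`, and `v + [e_a]`, `v + [e_b]` are
adjacent iff `e_a + e_b + e_z ∈ col(N)` for some `z`, i.e. iff `a` and `b` are collinear.
-/

open Finset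

variable {X : Type*} [Fintype X] [DecidableEq X]

/-- Hamming weight of a vector in `F_2^X`. -/
def wtv (v : X → ZMod 2) : ℕ := (Finset.univ.filter fun x => v x ≠ 0).card

/-- The column of the point-line incidence matrix corresponding to the line `ℓ`:
the characteristic vector of `ℓ` over `F_2`. -/
def lineVec (ℓ : Finset X) : X → ZMod 2 := fun x => if x ∈ ℓ then 1 else 0

/-- The column space over `F_2` of the point-line incidence matrix of `(X, L)`. -/
def colSpace (L : Finset (Finset X)) : Submodule (ZMod 2) (X → ZMod 2) :=
  Submodule.span (ZMod 2) {v | ∃ ℓ ∈ L, v = lineVec ℓ}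
/-- The Cayley graph of `V = F_2^X / col(N)` with connection set the images of the
standard basis vectors `e_x`. -/
def cayleyGraph (L : Finset (Finset X)) :
    SimpleGraph ((X → ZMod 2) ⧸ colSpace L) where
  Adj u v := u ≠ v ∧ ∃ x : X, v = u + (colSpace L).mkQ (Pi.single x 1)
  symm := by
    constructor
    rintro u v ⟨h, x, hx⟩
    refine ⟨h.symm, x, ?_⟩
    have he : (colSpace L).mkQ (Pi.single x 1) + (colSpace L).mkQ (Pi.single x 1) = 0 := by
      rw [← two_smul (ZMod 2)]
      have : (2 : ZMod 2) = 0 := by decide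
      rw [this, zero_smul]
    rw [hx, add_assoc, he, add_zero]
  loopless := ⟨fun _ h => h.1 rfl⟩

/-- The collinearity graph of `(X, L)`: two points adjacent iff they lie on a common line. -/
def collGraph (L : Finset (Finset X)) : SimpleGraph X where
  Adj x y := x ≠ y ∧ ∃ ℓ ∈ L, x ∈ ℓ ∧ y ∈ ℓ
  symm := ⟨fun _ _ ⟨h, ℓ, hℓ, hx, hy⟩ => ⟨h.symm, ℓ, hℓ, hy, hx⟩⟩
  loopless := ⟨fun _ h => h.1 rfl⟩

section lineVec

variable {α : Type*} [DecidableEq α]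

theorem ne_of_card_insert_insert_singleton_eq_three {x y z : α}
    (h : ({x, y, z} : Finset α).card = 3) : x ≠ y ∧ x ≠ z ∧ y ≠ z := by
  refine ⟨?_, ?_, ?_⟩ <;> rintro rfl <;> simp only [insert_eq_of_mem, mem_insert_self,
    mem_insert, mem_singleton, or_true] at h <;>
    exact absurd (h.symm.trans_le card_le_two) (by decide)

theorem lineVec_singleton (x : α) : lineVec {x} = Pi.single x 1 := by
  funext w
  simp [lineVec, Pi.single_apply]

theorem lineVec_insert {x : α} {s : Finset α} (hx : x ∉ s) :
    lineVec (insert x s) = Pi.single x 1 + lineVec s := by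
  funext w
  by_cases h : w = x
  · subst h; simp [lineVec, hx]
  · simp [lineVec, h]

theorem lineVec_pair {x y : α} (hxy : x ≠ y) :
    lineVec {x, y} = Pi.single x 1 + Pi.single y 1 := by
  rw [lineVec_insert (by simpa using hxy), lineVec_singleton]

theorem lineVec_triple {x y z : α} (hxy : x ≠ y) (hxz : x ≠ z) (hyz : y ≠ z) :
    lineVec {x, y, z} = Pi.single x 1 + Pi.single y 1 + Pi.single z 1 := by
  rw [lineVec_insert (by simp [hxy, hxz]), lineVec_pair hyz, add_assoc]

theorem lineVec_injective : Function.Injective (lineVec : Finset α → α → ZMod 2) := by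
  intro s t h
  ext w
  have hw := congrFun h w
  by_cases hs : w ∈ s <;> by_cases ht : w ∈ t <;> simp_all [lineVec]

theorem lineVec_mem_colSpace {L : Finset (Finset α)} {ℓ : Finset α} (hℓ : ℓ ∈ L) :
    lineVec ℓ ∈ colSpace L :=
  Submodule.subset_span ⟨ℓ, hℓ, rfl⟩

theorem apply_eq_zero_of_mem_colSpace {L : Finset (Finset α)} {x : α} (hx : ∀ ℓ ∈ L, x ∉ ℓ)
    {v : α → ZMod 2} (hv : v ∈ colSpace L) : v x = 0 := by
  suffices colSpace L ≤ LinearMap.ker (LinearMap.proj x) from this hv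
  rw [colSpace, Submodule.span_le]
  rintro _ ⟨ℓ, hℓ, rfl⟩
  simp [lineVec, hx ℓ hℓ]

theorem exists_insert_insert_singleton_mem_iff {L : Finset (Finset α)}
    (hline : ∀ ℓ ∈ L, ℓ.card = 3) {x y : α} (hxy : x ≠ y) :
    (∃ z, ({x, y, z} : Finset α) ∈ L) ↔ ∃ ℓ ∈ L, x ∈ ℓ ∧ y ∈ ℓ := by
  refine ⟨fun ⟨z, hz⟩ => ⟨_, hz, by simp, by simp⟩, fun ⟨ℓ, hℓ, hx, hy⟩ => ?_⟩
  have hy' : y ∈ ℓ.erase x := mem_erase.mpr ⟨hxy.symm, hy⟩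
  obtain ⟨z, hz⟩ : ∃ z, (ℓ.erase x).erase y = {z} := by
    rw [← card_eq_one, card_erase_of_mem hy', card_erase_of_mem hx, hline ℓ hℓ]
  refine ⟨z, ?_⟩
  rwa [← hz, insert_erase hy', insert_erase hx]

theorem collGraph_adj_iff {L : Finset (Finset α)} (hline : ∀ ℓ ∈ L, ℓ.card = 3) {x y : α} :
    (collGraph L).Adj x y ↔ x ≠ y ∧ ∃ z, ({x, y, z} : Finset α) ∈ L :=
  and_congr_right fun hxy => (exists_insert_insert_singleton_mem_iff hline hxy).symm

end lineVec

theorem Submodule.mkQ_eq_mkQ_iff_add_mem {M : Type*} [AddCommGroup M] [Module (ZMod 2) M]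
    (p : Submodule (ZMod 2) M) (u w : M) : p.mkQ u = p.mkQ w ↔ u + w ∈ p := by
  rw [mkQ_apply, mkQ_apply, Quotient.eq, ZModModule.sub_eq_add]

section colSpace

variable {L : Finset (Finset X)}

theorem wtv_lineVec (s : Finset X) : wtv (lineVec s) = s.card := by
  simp [wtv, lineVec]

theorem single_add_single_notMem_colSpace (h2 : ∀ v ∈ colSpace L, wtv v ≠ 2) {x y : X}
    (hxy : x ≠ y) : Pi.single x 1 + Pi.single y 1 ∉ colSpace L := by
  intro hmem
  rw [← lineVec_pair hxy] at hmem
  exact h2 _ hmem (by rw [wtv_lineVec, card_pair hxy])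

theorem single_notMem_colSpace (hline : ∀ ℓ ∈ L, ℓ.card = 3) (h2 : ∀ v ∈ colSpace L, wtv v ≠ 2)
    (x : X) : Pi.single x 1 ∉ colSpace L := by
  intro hx
  have hfree : ∀ ℓ ∈ L, x ∉ ℓ := by
    intro ℓ hℓ hxℓ
    have hsplit : lineVec ℓ = Pi.single x 1 + lineVec (ℓ.erase x) := by
      rw [← lineVec_insert (notMem_erase x ℓ), insert_erase hxℓ]
    have herase : Pi.single x 1 + lineVec ℓ = lineVec (ℓ.erase x) := by
      rw [hsplit, ← add_assoc, ZModModule.add_self, zero_add]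
    refine h2 _ (herase ▸ add_mem hx (lineVec_mem_colSpace hℓ)) ?_
    rw [wtv_lineVec, card_erase_of_mem hxℓ, hline ℓ hℓ]
  simpa using apply_eq_zero_of_mem_colSpace hfree hx

theorem exists_single_add_single_add_single_mem_colSpace_iff (hline : ∀ ℓ ∈ L, ℓ.card = 3)
    (h2 : ∀ v ∈ colSpace L, wtv v ≠ 2) (h3 : ∀ v ∈ colSpace L, wtv v = 3 → ∃ ℓ ∈ L, v = lineVec ℓ)
    {x y : X} (hxy : x ≠ y) :
    (∃ z, Pi.single x 1 + Pi.single y 1 + Pi.single z 1 ∈ colSpace L) ↔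
      ∃ z, ({x, y, z} : Finset X) ∈ L := by
  refine ⟨fun ⟨z, hz⟩ => ⟨z, ?_⟩, fun ⟨z, hz⟩ => ⟨z, ?_⟩⟩
  · obtain rfl | hxz := eq_or_ne x z
    · rw [add_right_comm, ZModModule.add_self, zero_add] at hz
      exact absurd hz (single_notMem_colSpace hline h2 y)
    obtain rfl | hyz := eq_or_ne y z
    · rw [add_assoc, ZModModule.add_self, add_zero] at hz
      exact absurd hz (single_notMem_colSpace hline h2 x)
    rw [← lineVec_triple hxy hxz hyz] at hz
    obtain ⟨ℓ, hℓ, hzℓ⟩ := h3 _ hz (by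
      rw [wtv_lineVec, card_eq_three]; exact ⟨x, y, z, hxy, hxz, hyz, rfl⟩)
    rwa [lineVec_injective hzℓ]
  · obtain ⟨-, hxz, hyz⟩ := ne_of_card_insert_insert_singleton_eq_three (hline _ hz)
    rw [← lineVec_triple hxy hxz hyz]
    exact lineVec_mem_colSpace hz

end colSpace

section cayleyGraph

variable {L : Finset (Finset X)}

theorem cayleyGraph_adj_add_mkQ_single (hline : ∀ ℓ ∈ L, ℓ.card = 3)
    (h2 : ∀ v ∈ colSpace L, wtv v ≠ 2) (v : (X → ZMod 2) ⧸ colSpace L) (x : X) :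
    (cayleyGraph L).Adj v (v + (colSpace L).mkQ (Pi.single x 1)) := by
  refine ⟨fun h => single_notMem_colSpace hline h2 x ?_, x, rfl⟩
  rwa [left_eq_add, Submodule.mkQ_apply, Submodule.Quotient.mk_eq_zero] at h

theorem cayleyGraph_adj_add_mkQ_single_iff (h2 : ∀ v ∈ colSpace L, wtv v ≠ 2)
    (v : (X → ZMod 2) ⧸ colSpace L) (a b : X) :
    (cayleyGraph L).Adj (v + (colSpace L).mkQ (Pi.single a 1))
        (v + (colSpace L).mkQ (Pi.single b 1)) ↔
      a ≠ b ∧ ∃ z, Pi.single a 1 + Pi.single b 1 + Pi.single z 1 ∈ colSpace L := by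
  have hne : (colSpace L).mkQ (Pi.single a 1) ≠ (colSpace L).mkQ (Pi.single b 1) ↔ a ≠ b := by
    refine ⟨?_, fun hab h => single_add_single_notMem_colSpace h2 hab ?_⟩
    · rintro h rfl
      exact h rfl
    · rwa [← Submodule.mkQ_eq_mkQ_iff_add_mem]
  have hstep : ∀ z, v + (colSpace L).mkQ (Pi.single b 1) =
      v + (colSpace L).mkQ (Pi.single a 1) + (colSpace L).mkQ (Pi.single z 1) ↔
        Pi.single a 1 + Pi.single b 1 + Pi.single z 1 ∈ colSpace L := fun z => by
    rw [add_assoc, add_right_inj, ← map_add, Submodule.mkQ_eq_mkQ_iff_add_mem, add_left_comm,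
      ← add_assoc]
  exact and_congr ((add_right_injective v).ne_iff.trans hne) (exists_congr hstep)

def cayleyNeighborEmbedding (hline : ∀ ℓ ∈ L, ℓ.card = 3) (h2 : ∀ v ∈ colSpace L, wtv v ≠ 2)
    (h3 : ∀ v ∈ colSpace L, wtv v = 3 → ∃ ℓ ∈ L, v = lineVec ℓ)
    (v : (X → ZMod 2) ⧸ colSpace L) : collGraph L ↪g cayleyGraph L where
  toFun x := v + (colSpace L).mkQ (Pi.single x 1)
  inj' _ _ h := by_contra fun hab => single_add_single_notMem_colSpace h2 hab <|
    (Submodule.mkQ_eq_mkQ_iff_add_mem _ _ _).1 (add_left_cancel h)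
  map_rel_iff' {a b} := (cayleyGraph_adj_add_mkQ_single_iff h2 v a b).trans <|
    (and_congr_right fun hab =>
      exists_single_add_single_add_single_mem_colSpace_iff hline h2 h3 hab).trans
    (collGraph_adj_iff hline).symm

theorem range_cayleyNeighborEmbedding (hline : ∀ ℓ ∈ L, ℓ.card = 3)
    (h2 : ∀ v ∈ colSpace L, wtv v ≠ 2)
    (h3 : ∀ v ∈ colSpace L, wtv v = 3 → ∃ ℓ ∈ L, v = lineVec ℓ)
    (v : (X → ZMod 2) ⧸ colSpace L) :
    Set.range (cayleyNeighborEmbedding hline h2 h3 v) = (cayleyGraph L).neighborSet v := by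
  ext w
  constructor
  · rintro ⟨x, rfl⟩
    exact cayleyGraph_adj_add_mkQ_single hline h2 v x
  · rintro ⟨-, x, rfl⟩
    exact ⟨x, rfl⟩

end cayleyGraph

theorem pls_cayley_locally_general (L : Finset (Finset X))
    (hline : ∀ ℓ ∈ L, ℓ.card = 3)
    (h2 : ∀ v ∈ colSpace L, wtv v ≠ 2)
    (h3 : ∀ v ∈ colSpace L, wtv v = 3 → ∃ ℓ ∈ L, v = lineVec ℓ) :
    (∀ x y : X, x ≠ y →
      ((∃ z : X, Pi.single x 1 + Pi.single y 1 + Pi.single z 1 ∈ colSpace L) ↔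
        (∃ z : X, ({x, y, z} : Finset X) ∈ L))) ∧
    (∀ v : (X → ZMod 2) ⧸ colSpace L,
      Nonempty (((cayleyGraph L).induce ((cayleyGraph L).neighborSet v)) ≃g collGraph L)) := by
  refine ⟨fun x y => exists_single_add_single_add_single_mem_colSpace_iff hline h2 h3, fun v => ?_⟩
  rw [← range_cayleyNeighborEmbedding hline h2 h3 v]
  exact ⟨(cayleyNeighborEmbedding hline h2 h3 v).isoInduceRange.symm⟩

/-- If the column space of `N` contains no weight-2 vector and its only weight-3 vectors
are the columns of `N`, then for `x ≠ y` the images of `e_x` and `e_y` in `V` differ by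
the image of some `e_z` iff `{x,y,z}` is a line; consequently the Cayley graph `Γ` of `V`
is locally the collinearity graph of `(X, L)`. -/
theorem pls_cayley_locally (L : Finset (Finset X))
    (hline : ∀ ℓ ∈ L, ℓ.card = 3)
    (hpls : ∀ ℓ₁ ∈ L, ∀ ℓ₂ ∈ L, ∀ x y : X, x ≠ y →
      x ∈ ℓ₁ → y ∈ ℓ₁ → x ∈ ℓ₂ → y ∈ ℓ₂ → ℓ₁ = ℓ₂)
    (h2 : ∀ v ∈ colSpace L, wtv v ≠ 2)
    (h3 : ∀ v ∈ colSpace L, wtv v = 3 → ∃ ℓ ∈ L, v = lineVec ℓ) :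
    (∀ x y : X, x ≠ y →
      ((∃ z : X, Pi.single x 1 + Pi.single y 1 + Pi.single z 1 ∈ colSpace L) ↔
        (∃ z : X, ({x, y, z} : Finset X) ∈ L))) ∧
    (∀ v : (X → ZMod 2) ⧸ colSpace L,
      Nonempty (((cayleyGraph L).induce ((cayleyGraph L).neighborSet v)) ≃g collGraph L)) :=
  pls_cayley_locally_general L hline h2 h3
end

section
/- Let (X,L) be a finite partial linear space with lines of size 3. Suppose that for any two distinct points there is a geometric hyperplane of (X,L) containing exactly one of them, and for any three pairwise noncollinear points there is a geometric hyperplane containing exactly two of them (missing precisely one). Then the column space over F_2 of the point-line incidence matrix N contains no vector of weight 2, and its only vectors of weight 3 are the columns of N. -/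
open Finset

variable {X : Type*} [Fintype X] [DecidableEq X]

/-- A geometric hyperplane of `(X, L)`: a proper subset of points such that every line is
either contained in it or meets it in exactly one point. -/
def IsGeomHyperplane (L : Finset (Finset X)) (H : Set X) : Prop :=
  H ≠ Set.univ ∧ ∀ ℓ ∈ L, (∀ x ∈ ℓ, x ∈ H) ∨ (∃! x, x ∈ ℓ ∧ x ∈ H)

open Classical in
noncomputable def phiH (H : Set X) (v : X → ZMod 2) : ZMod 2 :=
  ∑ x, if x ∈ H then 0 else v x

lemma zmod2_cases : ∀ a : ZMod 2, a = 0 ∨ a = 1 := by decide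

open Classical in
lemma phiH_card (H : Set X) (v : X → ZMod 2) :
    phiH H v = (((univ.filter fun x => v x ≠ 0).filter fun x => x ∉ H).card : ZMod 2) := by
  classical
  rw [Finset.filter_filter, ← Finset.sum_boole]
  unfold phiH
  apply Finset.sum_congr rfl
  intro x _
  rcases zmod2_cases (v x) with h | h <;> by_cases hx : x ∈ H <;> simp [h, hx]

lemma supp_lineVec (ℓ : Finset X) : (univ.filter fun x => lineVec ℓ x ≠ 0) = ℓ := by
  ext x
  simp only [Finset.mem_filter, Finset.mem_univ, true_and, lineVec]
  by_cases hx : x ∈ ℓ <;> simp [hx]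

lemma phiH_line {L : Finset (Finset X)} {H : Set X} (hH : IsGeomHyperplane L H)
    (hline : ∀ ℓ ∈ L, ℓ.card = 3) {ℓ : Finset X} (hℓ : ℓ ∈ L) :
    phiH H (lineVec ℓ) = 0 := by
  classical
  rw [phiH_card, supp_lineVec]
  rcases hH.2 ℓ hℓ with h | ⟨x₀, ⟨hx₀ℓ, hx₀H⟩, hu⟩
  · rw [Finset.filter_false_of_mem (fun x hx => by simp [h x hx])]; simp
  · have h1 : ℓ.filter (fun x => x ∈ H) = {x₀} := by
      ext y
      simp only [Finset.mem_filter, Finset.mem_singleton]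
      constructor
      · rintro ⟨hy, hyH⟩; exact hu y ⟨hy, hyH⟩
      · rintro rfl; exact ⟨hx₀ℓ, hx₀H⟩
    have h2 := Finset.card_filter_add_card_filter_not (s := ℓ)
      (p := fun x => x ∈ H)
    rw [h1, hline ℓ hℓ, Finset.card_singleton] at h2
    have : (ℓ.filter fun x => x ∉ H).card = 2 := by omega
    rw [this]; decide

lemma phiH_colSpace {L : Finset (Finset X)} {H : Set X} (hH : IsGeomHyperplane L H)
    (hline : ∀ ℓ ∈ L, ℓ.card = 3) {v : X → ZMod 2} (hv : v ∈ colSpace L) :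
    phiH H v = 0 := by
  classical
  induction hv using Submodule.span_induction with
  | mem w hw => obtain ⟨ℓ, hℓ, rfl⟩ := hw; exact phiH_line hH hline hℓ
  | zero => simp [phiH]
  | add a b _ _ ha hb =>
      have : phiH H (a + b) = phiH H a + phiH H b := by
        unfold phiH; rw [← Finset.sum_add_distrib]
        apply Finset.sum_congr rfl; intro x _
        by_cases hx : x ∈ H <;> simp [hx]
      rw [this, ha, hb, add_zero]
  | smul c a _ ha =>
      have : phiH H (c • a) = c * phiH H a := by
        unfold phiH; rw [Finset.mul_sum]
        apply Finset.sum_congr rfl; intro x _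
        by_cases hx : x ∈ H <;> simp [hx]
      rw [this, ha, mul_zero]

lemma zadd : ∀ a b : ZMod 2, a + b = 0 ↔ a = b := by decide

lemma eq_lineVec_of_supp {v : X → ZMod 2} {ℓ : Finset X}
    (hs : (univ.filter fun t => v t ≠ 0) = ℓ) : v = lineVec ℓ := by
  funext t
  have ht : v t ≠ 0 ↔ t ∈ ℓ := by rw [← hs]; simp
  by_cases h : t ∈ ℓ
  · rcases zmod2_cases (v t) with h0 | h1
    · exact absurd h (by rw [← ht]; simp [h0])
    · simp [lineVec, h, h1]
  · have : v t = 0 := by by_contra hc; exact h (ht.mp hc)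
    simp [lineVec, h, this]

lemma lineCase {L : Finset (Finset X)} (hline : ∀ ℓ ∈ L, ℓ.card = 3)
    (no2 : ∀ v ∈ colSpace L, wtv v ≠ 2)
    {v : X → ZMod 2} (hv : v ∈ colSpace L) {x y z : X}
    (hxy : x ≠ y) (hxz : x ≠ z) (hyz : y ≠ z)
    (hs : (univ.filter fun t => v t ≠ 0) = {x, y, z})
    {ℓ : Finset X} (hℓ : ℓ ∈ L) (hx : x ∈ ℓ) (hy : y ∈ ℓ) :
    ∃ ℓ' ∈ L, v = lineVec ℓ' := by
  classical
  have hv1 : ∀ t, v t ≠ 0 ↔ t ∈ ({x, y, z} : Finset X) := by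
    intro t; rw [← hs]; simp
  by_cases hz : z ∈ ℓ
  · have hsub : ({x, y, z} : Finset X) ⊆ ℓ := by
      intro t ht; simp only [Finset.mem_insert, Finset.mem_singleton] at ht
      rcases ht with rfl | rfl | rfl <;> assumption
    have hcard : ({x, y, z} : Finset X).card = 3 := by
      rw [Finset.card_insert_of_notMem (by simp [hxy, hxz]),
        Finset.card_insert_of_notMem (by simp [hyz]), Finset.card_singleton]
    have heq : ({x, y, z} : Finset X) = ℓ :=
      Finset.eq_of_subset_of_card_le hsub (by rw [hcard, hline ℓ hℓ])
    exact ⟨ℓ, hℓ, eq_lineVec_of_supp (by rw [hs, heq])⟩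
  · exfalso
    have hwmem : v + lineVec ℓ ∈ colSpace L :=
      Submodule.add_mem _ hv (Submodule.subset_span ⟨ℓ, hℓ, rfl⟩)
    have hpair : ({x, y} : Finset X) ⊆ ℓ := by
      intro t ht; simp only [Finset.mem_insert, Finset.mem_singleton] at ht
      rcases ht with rfl | rfl <;> assumption
    have hsupp : (univ.filter fun t => (v + lineVec ℓ) t ≠ 0) = insert z (ℓ \ {x, y}) := by
      ext t
      simp only [Finset.mem_filter, Finset.mem_univ, true_and, Pi.add_apply,
        Finset.mem_insert, Finset.mem_sdiff, Finset.mem_singleton]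
      have hlv : lineVec ℓ t = if t ∈ ℓ then 1 else 0 := rfl
      constructor
      · intro h
        have hne : v t ≠ lineVec ℓ t := fun he => h ((zadd _ _).mpr he)
        by_cases htl : t ∈ ℓ
        · right
          have hv0 : v t = 0 := by
            rcases zmod2_cases (v t) with h0 | h1
            · exact h0
            · exact absurd (by rw [h1, hlv, if_pos htl]) hne
          have : t ∉ ({x, y, z} : Finset X) := fun hc => (hv1 t).mpr hc hv0
          simp only [Finset.mem_insert, Finset.mem_singleton] at this
          push_neg at this
          exact ⟨htl, fun hc => by rcases hc with rfl | rfl <;> simp_all⟩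
        · left
          have hvt : v t ≠ 0 := by rw [hlv, if_neg htl] at hne; exact hne
          have := (hv1 t).mp hvt
          simp only [Finset.mem_insert, Finset.mem_singleton] at this
          rcases this with rfl | rfl | rfl
          · exact absurd hx htl
          · exact absurd hy htl
          · rfl
      · rintro (rfl | ⟨htl, hne⟩)
        · have hvt : v t ≠ 0 := (hv1 t).mpr (by simp)
          rw [hlv, if_neg hz, add_zero]; exact hvt
        · have hv0 : v t = 0 := by
            by_contra hc
            have := (hv1 t).mp hc
            simp only [Finset.mem_insert, Finset.mem_singleton] at this
            rcases this with rfl | rfl | rfl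
            · exact hne (Or.inl rfl)
            · exact hne (Or.inr rfl)
            · exact hz htl
          rw [hlv, if_pos htl, hv0, zero_add]; exact one_ne_zero
    have hwt : wtv (v + lineVec ℓ) = 2 := by
      unfold wtv
      rw [hsupp, Finset.card_insert_of_notMem (by simp [hz]),
        Finset.card_sdiff_of_subset hpair, hline ℓ hℓ,
        Finset.card_insert_of_notMem (by simp [hxy]), Finset.card_singleton]
    exact no2 _ hwmem hwt

/-- If for any two distinct points there is a geometric hyperplane containing exactly one
of them, and for any three pairwise noncollinear points there is a geometric hyperplane
containing exactly two of them, then the column space of the incidence matrix contains no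
weight-2 vector and its only weight-3 vectors are the columns of the incidence matrix. -/
theorem pls_hyperplanes_colSpace (L : Finset (Finset X))
    (hline : ∀ ℓ ∈ L, ℓ.card = 3)
    (hpls : ∀ ℓ₁ ∈ L, ∀ ℓ₂ ∈ L, ∀ x y : X, x ≠ y →
      x ∈ ℓ₁ → y ∈ ℓ₁ → x ∈ ℓ₂ → y ∈ ℓ₂ → ℓ₁ = ℓ₂)
    (h1 : ∀ x y : X, x ≠ y → ∃ H : Set X, IsGeomHyperplane L H ∧
      ((x ∈ H ∧ y ∉ H) ∨ (x ∉ H ∧ y ∈ H)))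
    (h2 : ∀ x y z : X, x ≠ y → x ≠ z → y ≠ z →
      ¬(∃ ℓ ∈ L, x ∈ ℓ ∧ y ∈ ℓ) → ¬(∃ ℓ ∈ L, x ∈ ℓ ∧ z ∈ ℓ) →
      ¬(∃ ℓ ∈ L, y ∈ ℓ ∧ z ∈ ℓ) →
      ∃ H : Set X, IsGeomHyperplane L H ∧
        ((x ∈ H ∧ y ∈ H ∧ z ∉ H) ∨ (x ∈ H ∧ z ∈ H ∧ y ∉ H) ∨
          (y ∈ H ∧ z ∈ H ∧ x ∉ H))) :
    (∀ v ∈ colSpace L, wtv v ≠ 2) ∧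
    (∀ v ∈ colSpace L, wtv v = 3 → ∃ ℓ ∈ L, v = lineVec ℓ) := by
  classical
  have no2 : ∀ v ∈ colSpace L, wtv v ≠ 2 := by
    intro v hv hw
    unfold wtv at hw
    obtain ⟨x, y, hxy, hs⟩ := Finset.card_eq_two.mp hw
    obtain ⟨H, hH, hcase⟩ := h1 x y hxy
    have h0 := phiH_colSpace hH hline hv
    rw [phiH_card, hs] at h0
    rcases hcase with ⟨hx, hy⟩ | ⟨hx, hy⟩ <;>
      simp [Finset.filter_insert, Finset.filter_singleton, hx, hy, hxy] at h0
  refine ⟨no2, ?_⟩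
  intro v hv hw
  unfold wtv at hw
  obtain ⟨x, y, z, hxy, hxz, hyz, hs⟩ := Finset.card_eq_three.mp hw
  by_cases hc1 : ∃ ℓ ∈ L, x ∈ ℓ ∧ y ∈ ℓ
  · obtain ⟨ℓ, hℓ, hx, hy⟩ := hc1
    exact lineCase hline no2 hv hxy hxz hyz hs hℓ hx hy
  by_cases hc2 : ∃ ℓ ∈ L, x ∈ ℓ ∧ z ∈ ℓ
  · obtain ⟨ℓ, hℓ, hx, hz⟩ := hc2
    have hs' : (univ.filter fun t => v t ≠ 0) = {x, z, y} := by
      rw [hs]; ext t; simp; tauto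
    exact lineCase hline no2 hv hxz hxy hyz.symm hs' hℓ hx hz
  by_cases hc3 : ∃ ℓ ∈ L, y ∈ ℓ ∧ z ∈ ℓ
  · obtain ⟨ℓ, hℓ, hy, hz⟩ := hc3
    have hs' : (univ.filter fun t => v t ≠ 0) = {y, z, x} := by
      rw [hs]; ext t; simp; tauto
    exact lineCase hline no2 hv hyz hxy.symm hxz.symm hs' hℓ hy hz
  · exfalso
    obtain ⟨H, hH, hcase⟩ := h2 x y z hxy hxz hyz hc1 hc2 hc3
    have h0 := phiH_colSpace hH hline hv
    rw [phiH_card, hs] at h0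
    rcases hcase with ⟨ha, hb, hc⟩ | ⟨ha, hb, hc⟩ | ⟨ha, hb, hc⟩ <;>
      simp [Finset.filter_insert, Finset.filter_singleton, ha, hb, hc, hxy, hxz, hyz] at h0
end

section
/- For d ≥ 1 and u, v even-weight vectors in F_2^{3d} with wt(u) = wt(v) = 2d and wt(u+v) = 2d, there is a unique even-weight vector w with wt(w) = 2d, wt(w + u) = 2d, and wt(w + v) = 2d, namely w = u + v; equivalently, every edge of this graph through the zero vector lies in a unique triangle. -/
open Finset

/-!
Let `A`, `B`, `C` be the complements of the supports of `u`, `v`, `w`. They are `d`-sets, and as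
`Xᶜ ∆ Yᶜ = X ∆ Y`, the weight conditions on the pairwise sums say that they are pairwise disjoint.
Three disjoint `d`-sets partition the `3d` coordinates, so `C = (A ∪ B)ᶜ` and the support of `w`
is `A ∪ B = A ∆ B`, which is the support of `u + v`.
-/

open scoped symmDiff

namespace Finset

variable {α : Type*} [DecidableEq α]

theorem disjoint_of_card_symmDiff_eq_add {s t : Finset α} (h : #(s ∆ t) = #s + #t) :
    Disjoint s t :=
  card_union_eq_card_add_card.mp <|
    (card_union_le s t).antisymm (h ▸ card_le_card symmDiff_subset_union)

variable [Fintype α]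

theorem eq_compl_union_of_pairwise_disjoint {a b c : Finset α} (hab : Disjoint a b)
    (hac : Disjoint a c) (hbc : Disjoint b c) (hcard : #a + #b + #c = Fintype.card α) :
    c = (a ∪ b)ᶜ := by
  refine eq_of_subset_of_card_le ?_ ?_
  · rw [subset_compl_iff_disjoint_left, disjoint_union_left]
    exact ⟨hac, hbc⟩
  · rw [card_compl, card_union_of_disjoint hab]
    omega

theorem eq_symmDiff_of_card_symmDiff_eq {d : ℕ} {s t w : Finset α}
    (hα : Fintype.card α = 3 * d) (hs : #s = 2 * d) (ht : #t = 2 * d) (hw : #w = 2 * d)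
    (hst : #(s ∆ t) = 2 * d) (hws : #(w ∆ s) = 2 * d) (hwt : #(w ∆ t) = 2 * d) :
    w = s ∆ t := by
  have hcompl : ∀ x : Finset α, #x = 2 * d → #xᶜ = d := fun x hx => by
    rw [card_compl, hx, hα]; omega
  have hdisj : ∀ x y : Finset α, #x = 2 * d → #y = 2 * d → #(x ∆ y) = 2 * d →
      Disjoint xᶜ yᶜ := fun x y hx hy hxy => by
    apply disjoint_of_card_symmDiff_eq_add
    rw [compl_symmDiff_compl, hxy, hcompl x hx, hcompl y hy]; omega
  have hpart : wᶜ = (sᶜ ∪ tᶜ)ᶜ := eq_compl_union_of_pairwise_disjoint (hdisj s t hs ht hst)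
    (hdisj w s hw hs hws).symm (hdisj w t hw ht hwt).symm
    (by rw [hcompl s hs, hcompl t ht, hcompl w hw, hα]; ring)
  rw [compl_inj_iff.mp hpart, ← symmDiff_eq_union (hdisj s t hs ht hst), compl_symmDiff_compl]

end Finset

section

variable {ι : Type*} [Fintype ι]

def vecSupport (v : ι → ZMod 2) : Finset ι := {i | v i ≠ 0}

theorem vecSupport_add [DecidableEq ι] (u v : ι → ZMod 2) :
    vecSupport (u + v) = vecSupport u ∆ vecSupport v := by
  ext i
  simp only [vecSupport, mem_filter, mem_univ, true_and, mem_symmDiff, Pi.add_apply]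
  generalize u i = x
  generalize v i = y
  revert x y
  decide

theorem vecSupport_injective : Function.Injective (vecSupport : (ι → ZMod 2) → Finset ι) := by
  intro u v h
  funext i
  have hi : u i ≠ 0 ↔ v i ≠ 0 := by simpa [vecSupport] using congrArg (i ∈ ·) h
  generalize u i = x at hi
  generalize v i = y at hi
  revert x y
  decide

end

theorem wt_eq_card_vecSupport {n : ℕ} (v : Fin n → ZMod 2) : wt v = #(vecSupport v) := rfl

theorem wt_add {n : ℕ} (u v : Fin n → ZMod 2) :
    wt (u + v) = #(vecSupport u ∆ vecSupport v) := by
  rw [wt_eq_card_vecSupport, vecSupport_add]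

theorem evenGraph_unique_triangle_general (d : ℕ)
    (u v : Fin (3 * d) → ZMod 2)
    (hwu : wt u = 2 * d) (hwv : wt v = 2 * d) (huv : wt (u + v) = 2 * d) :
    ∀ w : Fin (3 * d) → ZMod 2,
      (Even (wt w) ∧ wt w = 2 * d ∧ wt (w + u) = 2 * d ∧ wt (w + v) = 2 * d) ↔
        w = u + v := by
  intro w
  constructor
  · rintro ⟨-, hw, hwu', hwv'⟩
    rw [wt_add] at huv hwu' hwv'
    apply vecSupport_injective
    rw [vecSupport_add]
    exact eq_symmDiff_of_card_symmDiff_eq (Fintype.card_fin _) hwu hwv hw huv hwu' hwv'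
  · rintro rfl
    refine ⟨huv ▸ even_two_mul d, huv, ?_, ?_⟩
    · rwa [wt_add, vecSupport_add, symmDiff_symmDiff_self']
    · rwa [wt_add, vecSupport_add, symmDiff_symmDiff_cancel_right]

/-- For even-weight vectors `u, v` of weight `2d` in `F_2^{3d}` with `wt(u+v) = 2d`,
the unique even-weight vector `w` of weight `2d` with `wt(w+u) = wt(w+v) = 2d` is
`w = u + v`: every edge through the zero vector lies in a unique triangle. -/
theorem evenGraph_unique_triangle (d : ℕ) (hd : 1 ≤ d)
    (u v : Fin (3 * d) → ZMod 2) (hu : Even (wt u)) (hv : Even (wt v))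
    (hwu : wt u = 2 * d) (hwv : wt v = 2 * d) (huv : wt (u + v) = 2 * d) :
    ∀ w : Fin (3 * d) → ZMod 2,
      (Even (wt w) ∧ wt w = 2 * d ∧ wt (w + u) = 2 * d ∧ wt (w + v) = 2 * d) ↔
        w = u + v :=
  evenGraph_unique_triangle_general d u v hwu hwv huv
end
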